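/- Let h : [-1, 1] → ℝ be differentiable with h' nonnegative and nondecreasing (i.e., h convex and nondecreasing). Fix d ≥ 1 and define F(t₁, …, t_d) = Σᵢ₌₁^d [h'(tᵢ)(-1 + 2i/(d+1) - tᵢ) + h(tᵢ)] on the set E = {(t₁,…,t_d) : -1 ≤ t₁ ≤ ⋯ ≤ t_d ≤ 1}. Then the maximum of F over E equals Σᵢ₌₁^d h(-1 + 2i/(d+1)), attained at tᵢ = -1 + 2i/(d+1). -/
import Mathlib

lemma tangent_le (h h' : ℝ → ℝ)
    (hderiv : ∀ z ∈ Set.Icc (-1 : ℝ) 1, HasDerivAt h (h' z) z)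
    (hmono : MonotoneOn h' (Set.Icc (-1 : ℝ) 1))
    {t a : ℝ} (ht : t ∈ Set.Icc (-1 : ℝ) 1) (ha : a ∈ Set.Icc (-1 : ℝ) 1) :
    h' t * (a - t) + h t ≤ h a := by
  have hcont : ContinuousOn h (Set.Icc (-1 : ℝ) 1) := fun z hz =>
    (hderiv z hz).continuousAt.continuousWithinAt
  rcases lt_trichotomy t a with hlt | heq | hgt
  · have hsub : Set.Icc t a ⊆ Set.Icc (-1 : ℝ) 1 :=
      Set.Icc_subset_Icc ht.1 ha.2
    obtain ⟨c, hc, hceq⟩ := exists_hasDerivAt_eq_slope h h' hlt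
      (hcont.mono hsub)
      (fun x hx => hderiv x (hsub (Set.mem_Icc.2 ⟨le_of_lt hx.1, le_of_lt hx.2⟩)))
    have hcmem : c ∈ Set.Icc (-1 : ℝ) 1 := hsub ⟨le_of_lt hc.1, le_of_lt hc.2⟩
    have : h' t ≤ h' c := hmono ht hcmem (le_of_lt hc.1)
    have h1 : h' t * (a - t) ≤ h' c * (a - t) :=
      mul_le_mul_of_nonneg_right this (by linarith)
    have h2 : h' c * (a - t) = h a - h t := by
      rw [hceq, div_mul_cancel₀ _ (by linarith : a - t ≠ 0)]
    linarith
  · subst heq; simp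
  · have hsub : Set.Icc a t ⊆ Set.Icc (-1 : ℝ) 1 :=
      Set.Icc_subset_Icc ha.1 ht.2
    obtain ⟨c, hc, hceq⟩ := exists_hasDerivAt_eq_slope h h' hgt
      (hcont.mono hsub)
      (fun x hx => hderiv x (hsub (Set.mem_Icc.2 ⟨le_of_lt hx.1, le_of_lt hx.2⟩)))
    have hcmem : c ∈ Set.Icc (-1 : ℝ) 1 := hsub ⟨le_of_lt hc.1, le_of_lt hc.2⟩
    have : h' c ≤ h' t := hmono hcmem ht (le_of_lt hc.2)
    have h1 : h' c * (t - a) ≤ h' t * (t - a) :=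
      mul_le_mul_of_nonneg_right this (by linarith)
    have h2 : h' c * (t - a) = h t - h a := by
      rw [hceq, div_mul_cancel₀ _ (by linarith : t - a ≠ 0)]
    nlinarith

/-- For h convex nondecreasing (h' ≥ 0, h' nondecreasing) on [-1,1],
the function F(t₁,…,t_d) = Σ [h'(tᵢ)(-1+2i/(d+1)-tᵢ) + h(tᵢ)] on the ordered
simplex E attains maximum Σ h(-1+2i/(d+1)), at tᵢ = -1+2i/(d+1). -/
theorem stmt_6 (h h' : ℝ → ℝ) (d : ℕ) (hd : 1 ≤ d)
    (hderiv : ∀ z ∈ Set.Icc (-1 : ℝ) 1, HasDerivAt h (h' z) z)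
    (hnonneg : ∀ z ∈ Set.Icc (-1 : ℝ) 1, 0 ≤ h' z)
    (hmono : MonotoneOn h' (Set.Icc (-1 : ℝ) 1)) :
    (∀ t : Fin d → ℝ,
      ((∀ i, t i ∈ Set.Icc (-1 : ℝ) 1) ∧ (∀ i j : Fin d, i ≤ j → t i ≤ t j)) →
      ∑ i : Fin d, (h' (t i) * (-1 + 2 * ((i : ℕ) + 1) / (d + 1) - t i) + h (t i))
        ≤ ∑ i : Fin d, h (-1 + 2 * ((i : ℕ) + 1) / (d + 1))) ∧
    (∀ i : Fin d, (-1 + 2 * ((i : ℕ) + 1) / (d + 1) : ℝ) ∈ Set.Icc (-1 : ℝ) 1) ∧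
    (∀ i j : Fin d, i ≤ j →
      (-1 + 2 * ((i : ℕ) + 1) / (d + 1) : ℝ) ≤ -1 + 2 * ((j : ℕ) + 1) / (d + 1)) ∧
    (∑ i : Fin d, (h' (-1 + 2 * ((i : ℕ) + 1) / (d + 1)) *
        (-1 + 2 * ((i : ℕ) + 1) / (d + 1) - (-1 + 2 * ((i : ℕ) + 1) / (d + 1))) +
        h (-1 + 2 * ((i : ℕ) + 1) / (d + 1)))
      = ∑ i : Fin d, h (-1 + 2 * ((i : ℕ) + 1) / (d + 1))) := by
  have hdpos : (0:ℝ) < d + 1 := by positivity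
  have hamem : ∀ i : Fin d, (-1 + 2 * ((i : ℕ) + 1) / (d + 1) : ℝ) ∈ Set.Icc (-1 : ℝ) 1 := by
    intro i
    have h1 : ((i : ℕ) : ℝ) + 1 ≤ (d : ℝ) := by
      exact_mod_cast Nat.succ_le_of_lt i.2
    have h0 : (0:ℝ) ≤ ((i : ℕ) : ℝ) := by positivity
    constructor
    · have : (0:ℝ) ≤ 2 * ((i : ℕ) + 1) / (d + 1) := by positivity
      linarith
    · have : 2 * (((i : ℕ):ℝ) + 1) / (d + 1) ≤ 2 := by
        rw [div_le_iff₀ hdpos]; linarith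
      linarith
  refine ⟨?_, hamem, ?_, ?_⟩
  · intro t ⟨ht, _⟩
    apply Finset.sum_le_sum
    intro i _
    have := tangent_le h h' hderiv hmono (ht i) (hamem i)
    linarith
  · intro i j hij
    have : ((i : ℕ) : ℝ) ≤ ((j : ℕ) : ℝ) := by exact_mod_cast hij
    gcongr
  · apply Finset.sum_congr rfl
    intro i _
    ring_nf
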